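/- arXiv:1212.0559 — 2 statements merged into one kernel-verified Lean document; each statement's English description precedes it below -/
import Mathlib

section
/- Let L be a Lie ring and let D : L → L be a derivation of the Lie bracket (i.e. D⁅a,b⁆ = ⁅D a, b⁆ + ⁅a, D b⁆ for all a, b ∈ L) satisfying D ∘ D = 0. Then the derived bracket ⌊a,b⌋ := ⁅D a, b⁆ satisfies the Jacobi identity in Leibniz form: ⌊a, ⌊b,c⌋⌋ = ⌊⌊a,b⌋, c⌋ + ⌊b, ⌊a,c⌋⌋ for all a, b, c ∈ L. In other words, the derived bracket of a square-zero derivation is a Loday (Leibniz) bracket. -/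
/-- The derived bracket `⌊a,b⌋ := ⁅D a, b⁆` of a square-zero derivation `D` of a Lie ring
satisfies the Jacobi identity in Leibniz form (it is a Loday/Leibniz bracket). -/
theorem derived_bracket_leibniz_jacobi (L : Type*) [LieRing L] (D : L →+ L)
    (hder : ∀ a b : L, D ⁅a, b⁆ = ⁅D a, b⁆ + ⁅a, D b⁆)
    (hsq : ∀ a : L, D (D a) = 0) :
    ∀ a b c : L, ⁅D a, ⁅D b, c⁆⁆ = ⁅D ⁅D a, b⁆, c⁆ + ⁅D b, ⁅D a, c⁆⁆ := by
  intro a b c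
  rw [hder, hsq, zero_lie, zero_add, leibniz_lie]
end

section
/- Let g be a finite-dimensional Lie algebra over a field, and let g* carry a Lie algebra bracket [·,·]_{g*} such that the pair (g, g*) is a Lie bialgebra, i.e. the cocycle compatibility condition holds: for all x, y ∈ g and ξ, η ∈ g*, ([ξ,η]_{g*})([x,y]_g) = η(ad*_{ad*_x ξ} y) − ξ(ad*_{ad*_x η} y) − η(ad*_{ad*_y ξ} x) + ξ(ad*_{ad*_y η} x), equivalently, the map δ : g → g ⊗ g dual to the bracket of g* is a 1-cocycle: δ([x,y]_g) = (ad_x ⊗ 1 + 1 ⊗ ad_x)(δ(y)) − (ad_y ⊗ 1 + 1 ⊗ ad_y)(δ(x)). Then the bracket on g ⊕ g* defined by [(x,ξ),(y,η)] = ([x,y]_g + ad*_ξ y − ad*_η x, [ξ,η]_{g*} + ad*_x η − ad*_y ξ) is a Lie algebra bracket; it restricts to the given brackets on g and g*, and the canonical symmetric bilinear form ⟨(x,ξ),(y,η)⟩ = ξ(y) + η(x) is invariant for it. This Lie algebra is the Drinfeld double of the Lie bialgebra (g, g*). -/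
/-- The coadjoint action of `g` on `g*`: `(ad*_x ξ)(y) = −ξ⁅x,y⁆`. -/
noncomputable def coadOfLie (K g : Type*) [Field K] [LieRing g] [LieAlgebra K g]
    (x : g) (ξ : Module.Dual K g) : Module.Dual K g :=
  -(ξ ∘ₗ (LieAlgebra.ad K g x : g →ₗ[K] g))

/-- The coadjoint action of `g*` on `g ≅ g**`: `η(ad*_ξ x) = −x([ξ,η]_{g*}) = −(brs ξ η)(x)`. -/
noncomputable def coadOfDual (K g : Type*) [Field K] [LieRing g] [LieAlgebra K g]
    [FiniteDimensional K g]
    (brs : Module.Dual K g →ₗ[K] Module.Dual K g →ₗ[K] Module.Dual K g)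
    (ξ : Module.Dual K g) (x : g) : g :=
  (Module.evalEquiv K g).symm (-(Module.Dual.eval K g x ∘ₗ brs ξ))

/-- The double bracket on `g ⊕ g*`:
`[(x,ξ),(y,η)] = ([x,y]_g + ad*_ξ y − ad*_η x, [ξ,η]_{g*} + ad*_x η − ad*_y ξ)`. -/
noncomputable def doubleBracket (K g : Type*) [Field K] [LieRing g] [LieAlgebra K g]
    [FiniteDimensional K g]
    (brs : Module.Dual K g →ₗ[K] Module.Dual K g →ₗ[K] Module.Dual K g)
    (p q : g × Module.Dual K g) : g × Module.Dual K g :=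
  (⁅p.1, q.1⁆ + coadOfDual K g brs p.2 q.1 - coadOfDual K g brs q.2 p.1,
   brs p.2 q.2 + coadOfLie K g p.1 q.2 - coadOfLie K g q.1 p.2)

section Aux

variable {K g : Type*} [Field K] [LieRing g] [LieAlgebra K g]

lemma coadOfLie_apply (x : g) (ξ : Module.Dual K g) (y : g) :
    coadOfLie K g x ξ y = -ξ ⁅x, y⁆ := by
  simp [coadOfLie]

lemma apply_lie (φ : Module.Dual K g) (a b : g) :
    φ ⁅a, b⁆ = -(coadOfLie K g a φ) b := by
  simp [coadOfLie_apply]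

lemma coadOfLie_lie (a b : g) (φ : Module.Dual K g) :
    coadOfLie K g ⁅a, b⁆ φ =
      coadOfLie K g a (coadOfLie K g b φ) - coadOfLie K g b (coadOfLie K g a φ) := by
  ext v
  simp [coadOfLie_apply, lie_lie]

lemma coadOfLie_add_left (a b : g) (φ : Module.Dual K g) :
    coadOfLie K g (a + b) φ = coadOfLie K g a φ + coadOfLie K g b φ := by
  ext v; simp [coadOfLie_apply]; ring

lemma coadOfLie_sub_left (a b : g) (φ : Module.Dual K g) :
    coadOfLie K g (a - b) φ = coadOfLie K g a φ - coadOfLie K g b φ := by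
  ext v; simp [coadOfLie_apply, sub_lie, neg_add]; ring

lemma coadOfLie_neg_left (a : g) (φ : Module.Dual K g) :
    coadOfLie K g (-a) φ = -coadOfLie K g a φ := by
  ext v; rw [coadOfLie_apply, LinearMap.neg_apply, coadOfLie_apply, neg_lie, map_neg, neg_neg]

lemma coadOfLie_smul_left (c : K) (a : g) (φ : Module.Dual K g) :
    coadOfLie K g (c • a) φ = c • coadOfLie K g a φ := by
  ext v; simp [coadOfLie_apply]

lemma coadOfLie_zero_left (φ : Module.Dual K g) :
    coadOfLie K g (0 : g) φ = 0 := by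
  ext v; simp [coadOfLie_apply]

lemma coadOfLie_add_right (a : g) (φ ψ : Module.Dual K g) :
    coadOfLie K g a (φ + ψ) = coadOfLie K g a φ + coadOfLie K g a ψ := by
  ext v; simp [coadOfLie_apply]; ring

lemma coadOfLie_sub_right (a : g) (φ ψ : Module.Dual K g) :
    coadOfLie K g a (φ - ψ) = coadOfLie K g a φ - coadOfLie K g a ψ := by
  ext v; simp [coadOfLie_apply, neg_add]; ring

lemma coadOfLie_neg_right (a : g) (φ : Module.Dual K g) :
    coadOfLie K g a (-φ) = -coadOfLie K g a φ := by
  ext v; simp [coadOfLie_apply]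

lemma coadOfLie_smul_right (c : K) (a : g) (φ : Module.Dual K g) :
    coadOfLie K g a (c • φ) = c • coadOfLie K g a φ := by
  ext v; simp [coadOfLie_apply]

lemma coadOfLie_zero_right (a : g) :
    coadOfLie K g a (0 : Module.Dual K g) = 0 := by
  ext v; simp [coadOfLie_apply]

variable [FiniteDimensional K g]
  (brs : Module.Dual K g →ₗ[K] Module.Dual K g →ₗ[K] Module.Dual K g)

lemma dual_ext {a b : g} (h : ∀ φ : Module.Dual K g, φ a = φ b) : a = b := by
  apply (Module.evalEquiv K g).injective
  ext φ
  simpa [Module.evalEquiv_apply] using h φ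

lemma apply_coad (φ ψ : Module.Dual K g) (v : g) :
    φ (coadOfDual K g brs ψ v) = -(brs ψ φ) v := by
  simp [coadOfDual]

lemma coadOfLie_coad (ψ : Module.Dual K g) (w : g) (φ : Module.Dual K g) (v : g) :
    (coadOfLie K g (coadOfDual K g brs ψ w) φ) v = (brs ψ (coadOfLie K g v φ)) w := by
  rw [coadOfLie_apply, ← lie_skew, map_neg, neg_neg, apply_lie, apply_coad, neg_neg]

lemma coad_add_left (ψ χ : Module.Dual K g) (v : g) :
    coadOfDual K g brs (ψ + χ) v = coadOfDual K g brs ψ v + coadOfDual K g brs χ v := by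
  apply dual_ext (K := K); intro φ; simp [apply_coad]; ring

lemma coad_sub_left (ψ χ : Module.Dual K g) (v : g) :
    coadOfDual K g brs (ψ - χ) v = coadOfDual K g brs ψ v - coadOfDual K g brs χ v := by
  apply dual_ext (K := K); intro φ; simp [apply_coad, neg_add]; ring

lemma coad_neg_left (ψ : Module.Dual K g) (v : g) :
    coadOfDual K g brs (-ψ) v = -coadOfDual K g brs ψ v := by
  apply dual_ext (K := K); intro φ; simp [apply_coad]

lemma coad_smul_left (c : K) (ψ : Module.Dual K g) (v : g) :
    coadOfDual K g brs (c • ψ) v = c • coadOfDual K g brs ψ v := by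
  apply dual_ext (K := K); intro φ; simp [apply_coad]

lemma coad_zero_left (v : g) :
    coadOfDual K g brs (0 : Module.Dual K g) v = 0 := by
  apply dual_ext (K := K); intro φ; simp [apply_coad]

lemma coad_add_right (ψ : Module.Dual K g) (v w : g) :
    coadOfDual K g brs ψ (v + w) = coadOfDual K g brs ψ v + coadOfDual K g brs ψ w := by
  apply dual_ext (K := K); intro φ; simp [apply_coad, neg_add]; ring

lemma coad_sub_right (ψ : Module.Dual K g) (v w : g) :
    coadOfDual K g brs ψ (v - w) = coadOfDual K g brs ψ v - coadOfDual K g brs ψ w := by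
  apply dual_ext (K := K); intro φ; simp [apply_coad]; ring

lemma coad_neg_right (ψ : Module.Dual K g) (v : g) :
    coadOfDual K g brs ψ (-v) = -coadOfDual K g brs ψ v := by
  apply dual_ext (K := K); intro φ; simp [apply_coad]

lemma coad_smul_right (c : K) (ψ : Module.Dual K g) (v : g) :
    coadOfDual K g brs ψ (c • v) = c • coadOfDual K g brs ψ v := by
  apply dual_ext (K := K); intro φ; simp [apply_coad]

lemma coad_zero_right (ψ : Module.Dual K g) :
    coadOfDual K g brs ψ (0 : g) = 0 := by
  apply dual_ext (K := K); intro φ; simp [apply_coad]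

end Aux

set_option maxHeartbeats 2000000 in
/-- For a Lie bialgebra `(g, g*)` (the cocycle compatibility condition holds), the
bracket `[(x,ξ),(y,η)] = ([x,y]_g + ad*_ξ y − ad*_η x, [ξ,η]_{g*} + ad*_x η − ad*_y ξ)`
is a Lie algebra bracket on `g ⊕ g*` that restricts to the given brackets on `g` and
`g*` and leaves the canonical symmetric bilinear form `⟨(x,ξ),(y,η)⟩ = ξ(y) + η(x)`
invariant: the Drinfeld double. -/
theorem drinfeld_double_exists (K g : Type*) [Field K] [LieRing g] [LieAlgebra K g]
    [FiniteDimensional K g]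
    (brs : Module.Dual K g →ₗ[K] Module.Dual K g →ₗ[K] Module.Dual K g)
    (hskew : ∀ ξ, brs ξ ξ = 0)
    (hjac : ∀ ξ η ζ, brs ξ (brs η ζ) = brs (brs ξ η) ζ + brs η (brs ξ ζ))
    (hcocycle : ∀ (x y : g) (ξ η : Module.Dual K g),
      brs ξ η ⁅x, y⁆ =
        η (coadOfDual K g brs (coadOfLie K g x ξ) y)
        - ξ (coadOfDual K g brs (coadOfLie K g x η) y)
        - η (coadOfDual K g brs (coadOfLie K g y ξ) x)
        + ξ (coadOfDual K g brs (coadOfLie K g y η) x)) :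
    (∀ p : g × Module.Dual K g, IsLinearMap K (doubleBracket K g brs p)) ∧
    (∀ q : g × Module.Dual K g, IsLinearMap K (fun p => doubleBracket K g brs p q)) ∧
    (∀ u, doubleBracket K g brs u u = 0) ∧
    (∀ u v w, doubleBracket K g brs u (doubleBracket K g brs v w) =
      doubleBracket K g brs (doubleBracket K g brs u v) w
        + doubleBracket K g brs v (doubleBracket K g brs u w)) ∧
    (∀ x y : g, doubleBracket K g brs (x, 0) (y, 0) = (⁅x, y⁆, (0 : Module.Dual K g))) ∧
    (∀ ξ η : Module.Dual K g, doubleBracket K g brs (0, ξ) (0, η) = ((0 : g), brs ξ η)) ∧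
    (∀ u v w : g × Module.Dual K g,
      ((doubleBracket K g brs u v).2 w.1 + w.2 (doubleBracket K g brs u v).1)
        + (v.2 (doubleBracket K g brs u w).1 + (doubleBracket K g brs u w).2 v.1) = 0) := by
  have hanti : ∀ α β : Module.Dual K g, brs α β = -brs β α := by
    intro α β
    have h : brs α β + brs β α = 0 := by
      have h2 := hskew (α + β)
      simp only [map_add, LinearMap.add_apply, hskew] at h2
      linear_combination (norm := abel) h2
    exact eq_neg_of_add_eq_zero_left h
  have hanti' : ∀ (α β : Module.Dual K g) (v : g), brs α β v = -(brs β α v) := by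
    intro α β v; rw [hanti α β]; simp
  have hjt : ∀ (α β γ : Module.Dual K g) (t : g),
      brs α (brs β γ) t = brs (brs α β) γ t + brs β (brs α γ) t := by
    intro α β γ t; rw [hjac]; simp
  have hswap : ∀ (a b : g) (φ : Module.Dual K g),
      coadOfLie K g a φ b = -(coadOfLie K g b φ) a := by
    intro a b φ
    rw [coadOfLie_apply, coadOfLie_apply, ← lie_skew, map_neg]
  have hc : ∀ (v w : g) (α β : Module.Dual K g),
      coadOfLie K g v (brs α β) w =
        brs (coadOfLie K g v α) β w - brs (coadOfLie K g v β) α w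
          - brs (coadOfLie K g w α) β v + brs (coadOfLie K g w β) α v := by
    intro v w α β
    have h := hcocycle v w α β
    rw [apply_lie] at h
    simp only [apply_coad, LinearMap.neg_apply] at h
    linear_combination -h
  refine ⟨?_, ?_, ?_, ?_, ?_, ?_, ?_⟩
  · intro p
    constructor
    · intro q r
      refine Prod.ext ?_ ?_ <;>
        simp [doubleBracket, coad_add_left, coad_add_right, coadOfLie_add_left,
          coadOfLie_add_right, lie_add, add_lie, map_add] <;> abel
    · intro c q
      refine Prod.ext ?_ ?_ <;>
        simp [doubleBracket, coad_smul_left, coad_smul_right, coadOfLie_smul_left,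
          coadOfLie_smul_right, lie_smul, smul_lie, map_smul, smul_add, smul_sub]
  · intro q
    constructor
    · intro p r
      refine Prod.ext ?_ ?_ <;>
        simp [doubleBracket, coad_add_left, coad_add_right, coadOfLie_add_left,
          coadOfLie_add_right, lie_add, add_lie, map_add] <;> abel
    · intro c p
      refine Prod.ext ?_ ?_ <;>
        simp [doubleBracket, coad_smul_left, coad_smul_right, coadOfLie_smul_left,
          coadOfLie_smul_right, lie_smul, smul_lie, map_smul, smul_add, smul_sub]
  · intro u
    refine Prod.ext ?_ ?_ <;> simp [doubleBracket, hskew]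
  · intro u v w
    obtain ⟨x, ξ⟩ := u; obtain ⟨y, η⟩ := v; obtain ⟨z, ζ⟩ := w
    refine Prod.ext ?_ ?_
    · apply dual_ext (K := K); intro φ
      simp only [doubleBracket, Prod.fst_add, Prod.snd_add, apply_lie, apply_coad,
        coadOfLie_lie, coadOfLie_coad, coadOfLie_add_left, coadOfLie_sub_left,
        coadOfLie_add_right, coadOfLie_sub_right, lie_add, add_lie, lie_sub, sub_lie,
        map_add, map_sub, map_neg, LinearMap.add_apply, LinearMap.sub_apply,
        LinearMap.neg_apply, neg_neg, neg_add, neg_sub]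
      linear_combination (-(hjt ξ η φ z)) - hjt η ζ φ x + hjt ξ ζ φ y
        + hc y z ξ φ + hc x y ζ φ - hc x z η φ
        + hanti' η (coadOfLie K g x φ) z - hanti' ζ (coadOfLie K g x φ) y
        - hanti' ξ (coadOfLie K g y φ) z + hanti' ξ (coadOfLie K g z φ) y
        + hanti' ζ (coadOfLie K g y φ) x - hanti' η (coadOfLie K g z φ) x
    · ext t
      simp only [doubleBracket, Prod.fst_add, Prod.snd_add, apply_lie, apply_coad,
        coadOfLie_lie, coadOfLie_coad, coadOfLie_add_left, coadOfLie_sub_left,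
        coadOfLie_add_right, coadOfLie_sub_right, lie_add, add_lie, lie_sub, sub_lie,
        map_add, map_sub, map_neg, LinearMap.add_apply, LinearMap.sub_apply,
        LinearMap.neg_apply, neg_neg, neg_add, neg_sub]
      linear_combination hjt ξ η ζ t + hc x t η ζ + hc z t ξ η - hc y t ξ ζ
        + hanti' ξ (coadOfLie K g y ζ) t - hanti' ξ (coadOfLie K g z η) t
        - hanti' η (coadOfLie K g x ζ) t - hanti' ζ (coadOfLie K g t η) x
        + hanti' η (coadOfLie K g t ζ) x - hanti' η (coadOfLie K g t ξ) z
        + hanti' ξ (coadOfLie K g t η) z + hanti' ζ (coadOfLie K g t ξ) y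
        - hanti' ξ (coadOfLie K g t ζ) y + hanti' η (coadOfLie K g z ξ) t
  · intro x y
    refine Prod.ext ?_ ?_ <;>
      simp [doubleBracket, coad_zero_left, coadOfLie_zero_right, map_zero]
  · intro ξ η
    refine Prod.ext ?_ ?_ <;>
      simp [doubleBracket, coad_zero_right, coadOfLie_zero_left]
  · intro u v w
    obtain ⟨x, ξ⟩ := u; obtain ⟨y, η⟩ := v; obtain ⟨z, ζ⟩ := w
    simp only [doubleBracket, apply_lie, apply_coad, LinearMap.add_apply,
      LinearMap.sub_apply, LinearMap.neg_apply, map_add, map_sub, map_neg]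
    linear_combination hanti' η ζ x - hswap y z ξ
end
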